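/- arXiv:1903.05214 — 6 statements merged into one kernel-verified Lean document; each statement's English description precedes it below -/
import Mathlib

section
/- Let X = {x ∈ ℝⁿ : Hₓx ≤ hₓ} and Y = {y ∈ ℝⁿ : H_y y ≤ h_y} be bounded polytopes with X nonempty. If X ⊆ Y, then there exists a nonnegative matrix Λ ∈ ℝ₊^{q_y × q_x} with Λ Hₓ = H_y and Λ hₓ ≤ h_y. -/
/-!
Fix a row `i` of `H_y`. The inequality `H_y,i ⬝ x ≤ h_y,i` holds on the nonempty polyhedron
`X`, hence, after homogenizing, `(z, μ) ↦ μ h_y,i - H_y,i ⬝ z` is nonnegative wherever all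
`μ h_x,j - H_x,j ⬝ z` and `μ` are (for `μ = 0`, `z` is a recession direction of `X`). By Farkas'
lemma `(-H_y,i, h_y,i)` is then a nonnegative combination of the `(-H_x,j, h_x,j)` and `(0, 1)`,
and the coefficients of the `(-H_x,j, h_x,j)` form row `i` of `Λ`.

Farkas' lemma is hyperplane separation from a closed cone; a finitely generated cone is closed
because, by the ratio test, it is a finite union of cones with linearly independent generators,
each the image of an orthant under a closed embedding.
-/

open Matrix Set

section LinearOrderedField

variable {𝕜 M ι : Type*} [Field 𝕜] [LinearOrder 𝕜] [IsStrictOrderedRing 𝕜]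
  [AddCommGroup M] [Module 𝕜 M] [Fintype ι]

/-- The ratio test of the simplex method: move `c` along the relation `g` until the first
coordinate vanishes. -/
theorem exists_nonneg_sum_smul_eq_of_sum_smul_eq_zero {v : ι → M} {c g : ι → 𝕜} (hc : 0 ≤ c)
    (hg : ∑ i, g i • v i = 0) (hpos : ∃ i, 0 < g i) :
    ∃ j, ∃ c' : ι → 𝕜, 0 ≤ c' ∧ c' j = 0 ∧ ∑ i, c' i • v i = ∑ i, c i • v i := by
  classical
  obtain ⟨j, hj, hmin⟩ := Finset.exists_min_image {i | 0 < g i} (fun i => c i / g i)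
    (by simpa [Finset.Nonempty] using hpos)
  have hgj : 0 < g j := by simpa using hj
  have hcj : 0 ≤ c j / g j := div_nonneg (hc j) hgj.le
  refine ⟨j, c - (c j / g j) • g, fun i => ?_, by simp [hgj.ne'], ?_⟩
  · simp only [Pi.zero_apply, Pi.sub_apply, Pi.smul_apply, smul_eq_mul, sub_nonneg]
    rcases lt_or_ge 0 (g i) with hgi | hgi
    · exact (le_div_iff₀ hgi).1 (hmin i (by simpa using hgi))
    · exact (mul_nonpos_of_nonneg_of_nonpos hcj hgi).trans (hc i)
  · simp [sub_smul, Finset.sum_sub_distrib, mul_smul, ← Finset.smul_sum, hg]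

namespace PointedCone

theorem mem_hull_range_iff {v : ι → M} {x : M} :
    x ∈ hull 𝕜 (range v) ↔ ∃ c : ι → 𝕜, 0 ≤ c ∧ ∑ i, c i • v i = x := by
  rw [Submodule.mem_span_range_iff_exists_fun]
  constructor
  · rintro ⟨c, rfl⟩
    exact ⟨fun i => c i, fun i => (c i).2, rfl⟩
  · rintro ⟨c, hc, rfl⟩
    exact ⟨fun i => ⟨c i, hc i⟩, rfl⟩

theorem hull_range_subset_iUnion_of_not_linearIndependent {v : ι → M}
    (hv : ¬LinearIndependent 𝕜 v) :
    (hull 𝕜 (range v) : Set M) ⊆ ⋃ j, hull 𝕜 (range fun i : {i // i ≠ j} => v i.1) := by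
  classical
  intro x hx
  obtain ⟨c, hc, rfl⟩ := mem_hull_range_iff.1 hx
  obtain ⟨g, hg, hpos⟩ : ∃ g : ι → 𝕜, ∑ i, g i • v i = 0 ∧ ∃ i, 0 < g i := by
    obtain ⟨g, hg, i, hi⟩ := Fintype.not_linearIndependent_iff.1 hv
    rcases hi.lt_or_gt with hneg | hpos
    · exact ⟨-g, by simp [neg_smul, hg], i, neg_pos.2 hneg⟩
    · exact ⟨g, hg, i, hpos⟩
  obtain ⟨j, c', hc', hj, hsum⟩ := exists_nonneg_sum_smul_eq_of_sum_smul_eq_zero hc hg hpos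
  refine mem_iUnion.2 ⟨j, mem_hull_range_iff.2 ⟨fun i => c' i, fun i => hc' i, ?_⟩⟩
  rw [← hsum, Fintype.sum_eq_add_sum_subtype_ne _ j, hj, zero_smul, zero_add]

end PointedCone

end LinearOrderedField

namespace PointedCone

variable {E : Type*} [AddCommGroup E] [TopologicalSpace E] [IsTopologicalAddGroup E]
  [Module ℝ E] [ContinuousSMul ℝ E] [T2Space E]

theorem isClosed_hull_range {ι : Type*} [Fintype ι] (v : ι → E) :
    IsClosed (hull ℝ (range v) : Set E) := by
  induction h : Fintype.card ι using Nat.strong_induction_on generalizing ι with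
  | _ n ih =>
  by_cases hv : LinearIndependent ℝ v
  · have hL := (Fintype.linearCombination ℝ v).isClosedEmbedding_of_injective
      (LinearMap.ker_eq_bot.2 hv.fintypeLinearCombination_injective)
    convert hL.isClosedMap _ (isClosed_Ici (a := (0 : ι → ℝ))) using 1
    ext x
    simp [mem_hull_range_iff, Fintype.linearCombination_apply]
  · classical
    have hcover : (hull ℝ (range v) : Set E) = ⋃ j, hull ℝ (range fun i : {i // i ≠ j} => v i.1) :=
      (hull_range_subset_iUnion_of_not_linearIndependent hv).antisymm <| iUnion_subset fun j =>
        Submodule.span_mono (range_comp_subset_range _ v)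
    rw [hcover]
    exact isClosed_iUnion_of_finite fun j =>
      ih _ (h ▸ Fintype.card_subtype_lt (p := (· ≠ j)) (not_not.2 rfl)) _ rfl

/-- **Farkas' lemma** for finitely generated cones. -/
theorem mem_hull_range_of_forall_nonneg [LocallyConvexSpace ℝ E] {ι : Type*} [Fintype ι]
    {v : ι → E} {x : E} (h : ∀ f : StrongDual ℝ E, (∀ i, 0 ≤ f (v i)) → 0 ≤ f x) :
    x ∈ hull ℝ (range v) := by
  by_contra hx
  obtain ⟨f, hf, hfx⟩ :=
    ProperCone.hyperplane_separation_point ⟨hull ℝ (range v), isClosed_hull_range v⟩ hx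
  exact hfx.not_ge (h f fun i => hf _ (subset_hull (mem_range_self i)))

end PointedCone

theorem LinearMap.exists_apply_prod_eq_dotProduct_add {R n : Type*} [CommSemiring R] [Fintype n]
    (f : (n → R) × R →ₗ[R] R) : ∃ (φ : n → R) (μ : R), ∀ u r, f (u, r) = u ⬝ᵥ φ + r * μ := by
  classical
  refine ⟨fun k => f (Pi.single k 1, 0), f (0, 1), fun u r => ?_⟩
  have hu : (u, r) = ∑ k, u k • ((Pi.single k 1 : n → R), (0 : R)) + r • (0, 1) := by
    ext <;> simp [Prod.fst_sum, Prod.snd_sum, Finset.sum_apply, Pi.single_apply]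
  simp only [hu, map_add, map_sum, map_smul, smul_eq_mul, dotProduct]

namespace Matrix

variable {m n : Type*} [Fintype n] {A : Matrix m n ℝ} {a : m → ℝ} {c : n → ℝ} {d : ℝ}

theorem dotProduct_le_of_mulVec_le_smul (hne : ∃ x, A *ᵥ x ≤ a)
    (h : ∀ x, A *ᵥ x ≤ a → c ⬝ᵥ x ≤ d) {z : n → ℝ} {μ : ℝ} (hμ : 0 ≤ μ)
    (hz : A *ᵥ z ≤ μ • a) : c ⬝ᵥ z ≤ μ * d := by
  rcases hμ.eq_or_lt with rfl | hμ
  · obtain ⟨x₀, hx₀⟩ := hne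
    rw [zero_smul] at hz
    have hray : ∀ t : ℝ, 0 ≤ t → c ⬝ᵥ x₀ + t * c ⬝ᵥ z ≤ d := fun t ht => by
      have hmem : A *ᵥ (x₀ + t • z) ≤ a := by
        rw [mulVec_add, mulVec_smul]
        intro i
        simpa using add_le_of_le_of_nonpos (hx₀ i) (mul_nonpos_of_nonneg_of_nonpos ht (hz i))
      simpa [dotProduct_add, dotProduct_smul] using h _ hmem
    rw [zero_mul]
    by_contra! hcz
    have hd : c ⬝ᵥ x₀ ≤ d := by simpa using hray 0 le_rfl
    have := hray ((d - c ⬝ᵥ x₀ + 1) / c ⬝ᵥ z) (div_nonneg (by linarith) hcz.le)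
    rw [div_mul_cancel₀ _ hcz.ne'] at this
    linarith
  · have hmem : A *ᵥ (μ⁻¹ • z) ≤ a := by
      rw [mulVec_smul]
      intro i
      simpa [inv_mul_le_iff₀ hμ] using hz i
    have := h _ hmem
    rwa [dotProduct_smul, smul_eq_mul, inv_mul_le_iff₀ hμ] at this

/-- The affine form of Farkas' lemma. -/
theorem exists_nonneg_vecMul_eq_of_forall_mulVec_le [Fintype m] (hne : ∃ x, A *ᵥ x ≤ a)
    (h : ∀ x, A *ᵥ x ≤ a → c ⬝ᵥ x ≤ d) : ∃ y : m → ℝ, 0 ≤ y ∧ y ᵥ* A = c ∧ y ⬝ᵥ a ≤ d := by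
  let w : m ⊕ Unit → (n → ℝ) × ℝ := Sum.elim (fun i => (-A i, a i)) fun _ => (0, 1)
  have hmem : ((-c, d) : (n → ℝ) × ℝ) ∈ PointedCone.hull ℝ (range w) := by
    refine PointedCone.mem_hull_range_of_forall_nonneg fun f hf => ?_
    obtain ⟨φ, μ, hf_apply⟩ := f.toLinearMap.exists_apply_prod_eq_dotProduct_add
    simp only [ContinuousLinearMap.coe_coe] at hf_apply
    have hrow : A *ᵥ φ ≤ μ • a := fun i => by
      have := hf (Sum.inl i)
      simp only [w, Sum.elim_inl, hf_apply, neg_dotProduct] at this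
      change A i ⬝ᵥ φ ≤ μ * a i
      linarith [mul_comm μ (a i)]
    have hμ : 0 ≤ μ := by simpa [w, hf_apply] using hf (Sum.inr ())
    have := dotProduct_le_of_mulVec_le_smul hne h hμ hrow
    rw [hf_apply, neg_dotProduct]
    linarith [mul_comm μ d]
  obtain ⟨y, hy, hsum⟩ := PointedCone.mem_hull_range_iff.1 hmem
  refine ⟨y ∘ Sum.inl, fun i => hy _, ?_, ?_⟩
  · simpa [w, Fintype.sum_sum_type, vecMul_eq_sum, Prod.fst_sum] using congrArg Prod.fst hsum
  · have hslack : 0 ≤ y (Sum.inr ()) := hy _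
    have hsnd := congrArg Prod.snd hsum
    simp only [w, Fintype.sum_sum_type, Sum.elim_inl, Sum.elim_inr, Prod.smul_mk, smul_eq_mul,
      mul_one, Finset.univ_unique, Finset.sum_singleton, Prod.snd_add, Prod.snd_sum] at hsnd
    simp only [dotProduct, Function.comp_apply]
    linarith

end Matrix

theorem hpoly_in_hpoly_necessary_general
    (n qx qy : ℕ)
    (Hx : Matrix (Fin qx) (Fin n) ℝ) (hx : Fin qx → ℝ)
    (Hy : Matrix (Fin qy) (Fin n) ℝ) (hy : Fin qy → ℝ)
    (hne : {x : Fin n → ℝ | Hx.mulVec x ≤ hx}.Nonempty)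
    (hsub : {x : Fin n → ℝ | Hx.mulVec x ≤ hx} ⊆ {y : Fin n → ℝ | Hy.mulVec y ≤ hy}) :
    ∃ Λ : Matrix (Fin qy) (Fin qx) ℝ,
      (∀ i j, 0 ≤ Λ i j) ∧ Λ * Hx = Hy ∧ Λ.mulVec hx ≤ hy := by
  choose Λ hΛ_nonneg hΛ_rows hΛ_rhs using fun i =>
    exists_nonneg_vecMul_eq_of_forall_mulVec_le (c := Hy i) (d := hy i) hne
      fun x hxX => hsub hxX i
  exact ⟨Λ, hΛ_nonneg, funext hΛ_rows, hΛ_rhs⟩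

theorem hpoly_in_hpoly_necessary
    (n qx qy : ℕ)
    (Hx : Matrix (Fin qx) (Fin n) ℝ) (hx : Fin qx → ℝ)
    (Hy : Matrix (Fin qy) (Fin n) ℝ) (hy : Fin qy → ℝ)
    (hne : {x : Fin n → ℝ | Hx.mulVec x ≤ hx}.Nonempty)
    (hbX : Bornology.IsBounded {x : Fin n → ℝ | Hx.mulVec x ≤ hx})
    (hbY : Bornology.IsBounded {y : Fin n → ℝ | Hy.mulVec y ≤ hy})
    (hsub : {x : Fin n → ℝ | Hx.mulVec x ≤ hx} ⊆ {y : Fin n → ℝ | Hy.mulVec y ≤ hy}) :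
    ∃ Λ : Matrix (Fin qy) (Fin qx) ℝ,
      (∀ i j, 0 ≤ Λ i j) ∧ Λ * Hx = Hy ∧ Λ.mulVec hx ≤ hy :=
  hpoly_in_hpoly_necessary_general n qx qy Hx hx Hy hy hne hsub
end

section
/- Let 𝕏 = x̄ + X·Pₓ and 𝕐 = ȳ + Y·P_y be affine transformations of H-polytopes Pₓ = {x ∈ ℝ^{nₓ} : Hₓx ≤ hₓ} and P_y = {y ∈ ℝ^{n_y} : H_y y ≤ h_y}, with Pₓ nonempty. If there exist matrices Γ ∈ ℝ^{n_y × nₓ}, β ∈ ℝ^{n_y}, and a nonnegative Λ ∈ ℝ₊^{q_y × q_x} such that X = YΓ, ȳ − x̄ = Yβ, Λ Hₓ = H_y Γ, and Λ hₓ ≤ h_y + H_y β, then 𝕏 ⊆ 𝕐. -/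
/-!
With `q := Γ p - β`, the identities `X = YΓ` and `ȳ - x̄ = Yβ` give `x̄ + X p = ȳ + Y q`,
and multiplying `Hₓ p ≤ hₓ` by the nonnegative `Λ` gives
`H_y q = Λ Hₓ p - H_y β ≤ Λ hₓ - H_y β ≤ h_y`.
-/

open Matrix

namespace Matrix

variable {m n k l R : Type*} [Fintype n] [Fintype k]

lemma mulVec_le_mulVec_of_nonneg [Semiring R] [PartialOrder R] [IsOrderedRing R]
    {Λ : Matrix m n R} (hΛ : ∀ i j, 0 ≤ Λ i j) {u v : n → R} (huv : u ≤ v) :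
    Λ *ᵥ u ≤ Λ *ᵥ v :=
  fun i => dotProduct_le_dotProduct_of_nonneg_left huv (hΛ i)

variable [Ring R]

lemma add_mulVec_eq_add_mulVec_sub {X : Matrix m n R} {Y : Matrix m k R} {Γ : Matrix k n R}
    {xbar ybar : m → R} {β : k → R} (hX : X = Y * Γ) (hβ : ybar - xbar = Y *ᵥ β)
    (p : n → R) :
    xbar + X *ᵥ p = ybar + Y *ᵥ (Γ *ᵥ p - β) := by
  rw [mulVec_sub, mulVec_mulVec, ← hX, ← hβ]
  abel

lemma mulVec_sub_le_of_mul_eq_of_nonneg [Fintype l] [PartialOrder R] [IsOrderedRing R]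
    {Hx : Matrix l n R} {Hy : Matrix m k R} {Γ : Matrix k n R} {Λ : Matrix m l R}
    {hx : l → R} {hy : m → R} {β : k → R}
    (hΛ : ∀ i j, 0 ≤ Λ i j) (hH : Λ * Hx = Hy * Γ) (hh : Λ *ᵥ hx ≤ hy + Hy *ᵥ β)
    {p : n → R} (hp : Hx *ᵥ p ≤ hx) :
    Hy *ᵥ (Γ *ᵥ p - β) ≤ hy :=
  calc Hy *ᵥ (Γ *ᵥ p - β) = Λ *ᵥ (Hx *ᵥ p) - Hy *ᵥ β := by
        rw [mulVec_sub, mulVec_mulVec, ← hH, ← mulVec_mulVec]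
    _ ≤ Λ *ᵥ hx - Hy *ᵥ β := sub_le_sub_right (mulVec_le_mulVec_of_nonneg hΛ hp) _
    _ ≤ hy := sub_le_iff_le_add.2 hh

end Matrix

theorem ahpoly_in_ahpoly_sufficient_general
    (n nx ny qx qy : ℕ)
    (xbar ybar : Fin n → ℝ)
    (X : Matrix (Fin n) (Fin nx) ℝ) (Y : Matrix (Fin n) (Fin ny) ℝ)
    (Hx : Matrix (Fin qx) (Fin nx) ℝ) (hx : Fin qx → ℝ)
    (Hy : Matrix (Fin qy) (Fin ny) ℝ) (hy : Fin qy → ℝ)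
    (Γ : Matrix (Fin ny) (Fin nx) ℝ) (β : Fin ny → ℝ)
    (Λ : Matrix (Fin qy) (Fin qx) ℝ)
    (hΛ : ∀ i j, 0 ≤ Λ i j)
    (hX : X = Y * Γ)
    (hβ : ybar - xbar = Y.mulVec β)
    (hH : Λ * Hx = Hy * Γ)
    (hh : Λ.mulVec hx ≤ hy + Hy.mulVec β) :
    (fun p => xbar + X.mulVec p) '' {p : Fin nx → ℝ | Hx.mulVec p ≤ hx}
      ⊆ (fun q => ybar + Y.mulVec q) '' {q : Fin ny → ℝ | Hy.mulVec q ≤ hy} := by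
  rintro _ ⟨p, hp, rfl⟩
  exact ⟨Γ *ᵥ p - β, mulVec_sub_le_of_mul_eq_of_nonneg hΛ hH hh hp,
    (add_mulVec_eq_add_mulVec_sub hX hβ p).symm⟩

theorem ahpoly_in_ahpoly_sufficient
    (n nx ny qx qy : ℕ)
    (xbar ybar : Fin n → ℝ)
    (X : Matrix (Fin n) (Fin nx) ℝ) (Y : Matrix (Fin n) (Fin ny) ℝ)
    (Hx : Matrix (Fin qx) (Fin nx) ℝ) (hx : Fin qx → ℝ)
    (Hy : Matrix (Fin qy) (Fin ny) ℝ) (hy : Fin qy → ℝ)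
    (hne : {p : Fin nx → ℝ | Hx.mulVec p ≤ hx}.Nonempty)
    (Γ : Matrix (Fin ny) (Fin nx) ℝ) (β : Fin ny → ℝ)
    (Λ : Matrix (Fin qy) (Fin qx) ℝ)
    (hΛ : ∀ i j, 0 ≤ Λ i j)
    (hX : X = Y * Γ)
    (hβ : ybar - xbar = Y.mulVec β)
    (hH : Λ * Hx = Hy * Γ)
    (hh : Λ.mulVec hx ≤ hy + Hy.mulVec β) :
    (fun p => xbar + X.mulVec p) '' {p : Fin nx → ℝ | Hx.mulVec p ≤ hx}
      ⊆ (fun q => ybar + Y.mulVec q) '' {q : Fin ny → ℝ | Hy.mulVec q ≤ hy} :=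
  ahpoly_in_ahpoly_sufficient_general n nx ny qx qy xbar ybar X Y Hx hx Hy hy Γ β Λ hΛ hX hβ hH hh
end

section
/- Let 𝕏 = x̄ + X·Pₓ and 𝕐 = ȳ + Y·P_y where Pₓ contains an open ball (is full-dimensional) and 𝕏 ⊆ 𝕐. Then every column of X lies in the column space of Y, and ȳ − x̄ lies in the column space of Y; i.e., there exist Γ with X = YΓ and β with ȳ − x̄ = Yβ. -/
/-!
Every point `p` of the ball inside `Pₓ` satisfies `X p - (ȳ - x̄) ∈ range Y`. Subtracting this at the
centre, the submodule `X⁻¹(range Y)` contains a translate of the ball, i.e. a neighbourhood of `0`,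
so it is the whole space: `range X ≤ range Y`, and then `ȳ - x̄ ∈ range Y` as well.
-/

open Matrix

section

variable {R E F : Type*} [Ring R] [TopologicalSpace R]
  [Filter.NeBot (nhdsWithin (0 : R) {x | IsUnit x})]
  [TopologicalSpace E] [AddCommGroup E] [ContinuousAdd E] [Module R E] [ContinuousSMul R E]
  [AddCommGroup F] [Module R F] {f : E →ₗ[R] F} {S : Submodule R F} {v : F} {U : Set E}

theorem LinearMap.range_le_of_forall_sub_mem (hU : IsOpen U) (hne : U.Nonempty)
    (h : ∀ p ∈ U, f p - v ∈ S) : LinearMap.range f ≤ S := by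
  obtain ⟨c, hc⟩ := hne
  have hshift : (· + c) ⁻¹' U ⊆ S.comap f := fun p hp => by
    simpa [map_add] using S.sub_mem (h _ hp) (h c hc)
  have hopen : IsOpen ((· + c) ⁻¹' U) := hU.preimage (continuous_add_const c)
  have hzero : (0 : E) ∈ (· + c) ⁻¹' U := by simpa using hc
  have htop : S.comap f = ⊤ :=
    (S.comap f).eq_top_of_nonempty_interior'
      ⟨0, interior_mono hshift (by rwa [hopen.interior_eq])⟩
  exact LinearMap.range_le_iff_comap.2 htop

theorem Submodule.mem_of_forall_sub_mem (hU : IsOpen U) (hne : U.Nonempty)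
    (h : ∀ p ∈ U, f p - v ∈ S) : v ∈ S := by
  obtain ⟨c, hc⟩ := hne
  have hfc : f c ∈ S := LinearMap.range_le_of_forall_sub_mem hU ⟨c, hc⟩ h ⟨c, rfl⟩
  simpa using S.sub_mem hfc (h c hc)

end

theorem Matrix.exists_eq_mul_of_range_mulVecLin_le {m n k R : Type*} [Fintype n] [DecidableEq n]
    [Fintype k] [CommRing R] {X : Matrix m n R} {Y : Matrix m k R}
    (h : LinearMap.range X.mulVecLin ≤ LinearMap.range Y.mulVecLin) :
    ∃ Γ : Matrix k n R, X = Y * Γ := by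
  have hcol : ∀ j, ∃ g, Y *ᵥ g = X.col j := fun j =>
    h ⟨Pi.single j 1, X.mulVec_single_one j⟩
  choose g hg using hcol
  refine ⟨(Matrix.of g)ᵀ, Matrix.ext_col fun j => ?_⟩
  rw [← hg j, ← Matrix.mulVec_single_one, ← Matrix.mulVec_mulVec, Matrix.mulVec_single_one]
  rfl

theorem ahpoly_containment_range_condition
    (n nx ny qx qy : ℕ)
    (xbar ybar : Fin n → ℝ)
    (X : Matrix (Fin n) (Fin nx) ℝ) (Y : Matrix (Fin n) (Fin ny) ℝ)
    (Hx : Matrix (Fin qx) (Fin nx) ℝ) (hx : Fin qx → ℝ)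
    (Hy : Matrix (Fin qy) (Fin ny) ℝ) (hy : Fin qy → ℝ)
    (hfull : ∃ (c : Fin nx → ℝ) (ε : ℝ), 0 < ε ∧
      Metric.ball c ε ⊆ {p : Fin nx → ℝ | Hx.mulVec p ≤ hx})
    (hsub : (fun p => xbar + X.mulVec p) '' {p : Fin nx → ℝ | Hx.mulVec p ≤ hx}
      ⊆ (fun q => ybar + Y.mulVec q) '' {q : Fin ny → ℝ | Hy.mulVec q ≤ hy}) :
    (∃ Γ : Matrix (Fin ny) (Fin nx) ℝ, X = Y * Γ) ∧
    (∃ β : Fin ny → ℝ, ybar - xbar = Y.mulVec β) := by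
  obtain ⟨c, ε, hε, hball⟩ := hfull
  have hrange : ∀ p ∈ Metric.ball c ε,
      X.mulVecLin p - (ybar - xbar) ∈ LinearMap.range Y.mulVecLin := by
    intro p hp
    obtain ⟨q, -, hq⟩ := hsub ⟨p, hball hp, rfl⟩
    refine ⟨q, ?_⟩
    simp only [Matrix.mulVecLin_apply] at hq ⊢
    rw [← add_right_inj ybar, hq]
    abel
  have hne : (Metric.ball c ε).Nonempty := Metric.nonempty_ball.2 hε
  obtain ⟨β, hβ⟩ := Submodule.mem_of_forall_sub_mem Metric.isOpen_ball hne hrange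
  exact ⟨Matrix.exists_eq_mul_of_range_mulVecLin_le
    (LinearMap.range_le_of_forall_sub_mem Metric.isOpen_ball hne hrange), β, hβ.symm⟩
end

section
/- Let Z_x = x̄ + X·B_{nₓ} and Z_y = ȳ + Y·B_{n_y} be zonotopes, where B_m = {z ∈ ℝ^m : ‖z‖_∞ ≤ 1}. If there exist Γ ∈ ℝ^{n_y × nₓ} and β ∈ ℝ^{n_y} with X = YΓ, ȳ − x̄ = Yβ, and ‖(Γ, β)‖_∞ ≤ 1 (i.e., for every row i, Σⱼ|Γᵢⱼ| + |βᵢ| ≤ 1), then Z_x ⊆ Z_y. -/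
open Matrix Finset

/-!
Every point `x̄ + X z` with `‖z‖_∞ ≤ 1` equals `ȳ + Y (Γ z - β)`, and each coordinate of
`Γ z - β` is bounded by the corresponding row sum of `(Γ, β)`, hence by `1`.
-/

section

variable {R : Type*} [CommRing R] {m n k : Type*} [Fintype n] [Fintype k]

theorem image_affine_subset_image_affine_of_factor (xbar ybar : m → R)
    (X : Matrix m n R) (Y : Matrix m k R) (Γ : Matrix k n R) (β : k → R)
    (hX : X = Y * Γ) (hβ : ybar - xbar = Y *ᵥ β) {S : Set (n → R)} {T : Set (k → R)}
    (hST : ∀ z ∈ S, Γ *ᵥ z - β ∈ T) :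
    (fun z => xbar + X *ᵥ z) '' S ⊆ (fun z => ybar + Y *ᵥ z) '' T := by
  rintro _ ⟨z, hz, rfl⟩
  refine ⟨Γ *ᵥ z - β, hST z hz, ?_⟩
  simp only [hX, mulVec_sub, ← mulVec_mulVec, ← hβ]
  abel

variable [LinearOrder R] [IsStrictOrderedRing R]

theorem abs_mulVec_apply_le_sum_abs (A : Matrix m n R) {z : n → R} (hz : ∀ j, |z j| ≤ 1)
    (i : m) : |(A *ᵥ z) i| ≤ ∑ j, |A i j| :=
  calc |(A *ᵥ z) i| = |∑ j, A i j * z j| := rfl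
    _ ≤ ∑ j, |A i j * z j| := abs_sum_le_sum_abs _ _
    _ ≤ ∑ j, |A i j| := sum_le_sum fun j _ => by
        rw [abs_mul]
        exact mul_le_of_le_one_right (abs_nonneg _) (hz j)

theorem abs_mulVec_sub_apply_le (A : Matrix m n R) (b : m → R) {z : n → R}
    (hz : ∀ j, |z j| ≤ 1) (i : m) : |(A *ᵥ z - b) i| ≤ (∑ j, |A i j|) + |b i| :=
  (abs_sub _ _).trans (add_le_add_left (abs_mulVec_apply_le_sum_abs A hz i) _)

end

theorem zonotope_in_zonotope_sufficient
    (n nx ny : ℕ)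
    (xbar ybar : Fin n → ℝ)
    (X : Matrix (Fin n) (Fin nx) ℝ) (Y : Matrix (Fin n) (Fin ny) ℝ)
    (Γ : Matrix (Fin ny) (Fin nx) ℝ) (β : Fin ny → ℝ)
    (hX : X = Y * Γ)
    (hβ : ybar - xbar = Y.mulVec β)
    (hnorm : ∀ i : Fin ny, (∑ j : Fin nx, |Γ i j|) + |β i| ≤ 1) :
    (fun z => xbar + X.mulVec z) '' {z : Fin nx → ℝ | ∀ j, |z j| ≤ 1}
      ⊆ (fun z => ybar + Y.mulVec z) '' {z : Fin ny → ℝ | ∀ j, |z j| ≤ 1} :=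
  image_affine_subset_image_affine_of_factor xbar ybar X Y Γ β hX hβ fun _ hz i =>
    (abs_mulVec_sub_apply_le Γ β hz i).trans (hnorm i)
end

section
/- For the unit box B_n = {x ∈ ℝⁿ : ‖x‖_∞ ≤ 1}, there exists a nonnegative matrix Λ ∈ ℝ₊^{2n_y × 2nₓ} satisfying Λ [I; −I] = [I; −I] Γ and Λ 𝟙 ≤ 𝟙 + [I; −I] β if and only if for every row i, Σⱼ |Γᵢⱼ| + |βᵢ| ≤ 1. -/
/-!
A row `(u, v)` of `Λ` with `u, v ≥ 0` and `u - v = g` has `∑ (u + v) ≥ ∑ |g|`, with equality for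
`u = g⁺`, `v = g⁻`. Hence a nonnegative `Λ` with `Λ [I; -I] = G` and `Λ 𝟙 ≤ c` exists iff
`∑ⱼ |G i j| ≤ c i` for every row. For `G = [Γ; -Γ]` and `c = 𝟙 + [β; -β]` the two rows indexed
by `i` read `∑ⱼ |Γ i j| ≤ 1 ± β i`.
-/

open Matrix Finset

namespace Matrix

variable {l n R : Type*} [Fintype n] [DecidableEq n] [Ring R]

theorem mul_fromRows_one_neg_one (A : Matrix l (n ⊕ n) R) :
    A * fromRows (1 : Matrix n n R) (-1) = A.toCols₁ - A.toCols₂ := by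
  ext i j
  -- `rw [mul_apply]` fails here: the product elaborates through the defeq `CStarMatrix` instance.
  exact mul_apply.trans (by simp [Fintype.sum_sum_type, one_apply, sub_eq_add_neg])

theorem exists_nonneg_mul_fromRows_one_neg_one_iff [LinearOrder R] [IsOrderedRing R]
    (G : Matrix l n R) (c : l → R) :
    (∃ Λ : Matrix l (n ⊕ n) R,
        (∀ i j, 0 ≤ Λ i j) ∧ Λ * fromRows (1 : Matrix n n R) (-1) = G ∧ Λ *ᵥ 1 ≤ c) ↔
      ∀ i, ∑ j, |G i j| ≤ c i := by
  simp_rw [mul_fromRows_one_neg_one]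
  constructor
  · rintro ⟨Λ, hΛ, rfl, hc⟩ i
    calc ∑ j, |Λ i (.inl j) - Λ i (.inr j)|
        ≤ ∑ j, (Λ i (.inl j) + Λ i (.inr j)) := by
          gcongr with j
          simpa only [abs_of_nonneg (hΛ _ _)] using abs_sub (Λ i (.inl j)) (Λ i (.inr j))
      _ = (Λ *ᵥ 1) i := by simp [mulVec, dotProduct, Fintype.sum_sum_type, sum_add_distrib]
      _ ≤ c i := hc i
  · intro hG
    refine ⟨fromCols (G.map (·⁺)) (G.map (·⁻)), ?_, ?_, fun i => ?_⟩
    · rintro i (j | j) <;> simp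
    · ext i j
      simp
    · simpa [mulVec, dotProduct, Fintype.sum_sum_type, ← sum_add_distrib, posPart_add_negPart]
        using hG i

end Matrix

theorem box_containment_lambda_iff
    (nx ny : ℕ)
    (Γ : Matrix (Fin ny) (Fin nx) ℝ) (β : Fin ny → ℝ) :
    (∃ Λ : Matrix (Fin ny ⊕ Fin ny) (Fin nx ⊕ Fin nx) ℝ,
        (∀ i j, 0 ≤ Λ i j) ∧
        Λ * (Matrix.fromRows (1 : Matrix (Fin nx) (Fin nx) ℝ)
              (-(1 : Matrix (Fin nx) (Fin nx) ℝ)))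
          = (Matrix.fromRows (1 : Matrix (Fin ny) (Fin ny) ℝ)
              (-(1 : Matrix (Fin ny) (Fin ny) ℝ))) * Γ ∧
        Λ.mulVec (fun _ => (1 : ℝ))
          ≤ (fun _ => (1 : ℝ)) +
            (Matrix.fromRows (1 : Matrix (Fin ny) (Fin ny) ℝ)
              (-(1 : Matrix (Fin ny) (Fin ny) ℝ))).mulVec β)
    ↔ ∀ i : Fin ny, (∑ j : Fin nx, |Γ i j|) + |β i| ≤ 1 := by
  refine (exists_nonneg_mul_fromRows_one_neg_one_iff _ _).trans ?_
  simp only [fromRows_mul, Matrix.one_mul, Matrix.neg_mul, fromRows_mulVec, neg_mulVec, one_mulVec,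
    Pi.add_apply, Pi.neg_apply, Sum.forall, fromRows_apply_inl, fromRows_apply_inr, Sum.elim_inl,
    Sum.elim_inr, Matrix.neg_apply, abs_neg, ← forall_and]
  refine forall_congr' fun i => ?_
  rw [← le_sub_iff_add_le', abs_le]
  constructor <;> rintro ⟨h₁, h₂⟩ <;> constructor <;> linarith
end

section
/- Let P_x ⊆ ℝ^{nₓ} be a nonempty polytope, x̄ ∈ ℝⁿ, X ∈ ℝ^{n×nₓ}, and let Y ∈ ℝ^{n×n_y}, ȳᵢ ∈ ℝⁿ, polytopes P_{y,i} for i = 1,…,N. If there exist λᵢ ≥ 0 with Σλᵢ = 1 and sets X̄ᵢ = x̄ᵢ + Xᵢ·P_x satisfying x̄ᵢ + Xᵢ·P_x ⊆ λᵢ(ȳᵢ + Yᵢ·P_{y,i}) for each i, with Σᵢ x̄ᵢ = x̄ and Σᵢ Xᵢ = X, then x̄ + X·P_x ⊆ conv(∪ᵢ (ȳᵢ + Yᵢ·P_{y,i})). -/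
open Matrix Pointwise Finset

theorem Set.image_sum_subset_sum_image {ι α M : Type*} [AddCommMonoid M] (s : Finset ι)
    (f : ι → α → M) (P : Set α) :
    (fun p => ∑ i ∈ s, f i p) '' P ⊆ ∑ i ∈ s, f i '' P := by
  rintro _ ⟨p, hp, rfl⟩
  exact Set.finsetSum_mem_finsetSum s _ _ fun i _ => Set.mem_image_of_mem _ hp

theorem sum_smul_subset_convexHull_iUnion {ι R E : Type*} [Fintype ι] [Field R] [LinearOrder R]
    [IsStrictOrderedRing R] [AddCommGroup E] [Module R E] {w : ι → R} (hw₀ : ∀ i, 0 ≤ w i)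
    (hw₁ : ∑ i, w i = 1) (S : ι → Set E) :
    ∑ i, w i • S i ⊆ convexHull R (⋃ i, S i) := by
  intro x hx
  obtain ⟨c, hc, rfl⟩ := (Set.mem_finsetSum _ _ x).1 hx
  choose z hz hcz using fun i => Set.mem_smul_set.1 (hc (mem_univ i))
  simp_rw [← hcz]
  exact (convex_convexHull R _).sum_mem (fun i _ => hw₀ i) hw₁
    fun i _ => subset_convexHull R _ (Set.mem_iUnion_of_mem i (hz i))

theorem ahpoly_in_convexhull_of_ahpolytopes_general
    (n nx N : ℕ) (ny : Fin N → ℕ) (qx : ℕ) (qy : Fin N → ℕ)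
    (xbar : Fin n → ℝ) (X : Matrix (Fin n) (Fin nx) ℝ)
    (Hx : Matrix (Fin qx) (Fin nx) ℝ) (hx : Fin qx → ℝ)
    (ybar : (i : Fin N) → Fin n → ℝ)
    (Y : (i : Fin N) → Matrix (Fin n) (Fin (ny i)) ℝ)
    (Hy : (i : Fin N) → Matrix (Fin (qy i)) (Fin (ny i)) ℝ)
    (hy : (i : Fin N) → Fin (qy i) → ℝ)
    (lam : Fin N → ℝ)
    (xbari : Fin N → Fin n → ℝ)
    (Xi : Fin N → Matrix (Fin n) (Fin nx) ℝ)
    (hlam : ∀ i, 0 ≤ lam i)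
    (hsumlam : ∑ i, lam i = 1)
    (hincl : ∀ i,
      (fun p => xbari i + (Xi i).mulVec p) '' {p : Fin nx → ℝ | Hx.mulVec p ≤ hx}
        ⊆ lam i • ((fun q => ybar i + (Y i).mulVec q) ''
            {q : Fin (ny i) → ℝ | (Hy i).mulVec q ≤ hy i}))
    (hsumx : ∑ i, xbari i = xbar)
    (hsumX : ∑ i, Xi i = X) :
    (fun p => xbar + X.mulVec p) '' {p : Fin nx → ℝ | Hx.mulVec p ≤ hx}
      ⊆ convexHull ℝ (⋃ i, (fun q => ybar i + (Y i).mulVec q) ''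
          {q : Fin (ny i) → ℝ | (Hy i).mulVec q ≤ hy i}) := by
  have hsplit : (fun p => xbar + X *ᵥ p) = fun p => ∑ i, (xbari i + Xi i *ᵥ p) := by
    funext p
    rw [sum_add_distrib, hsumx, ← sum_mulVec, hsumX]
  rw [hsplit]
  exact (Set.image_sum_subset_sum_image _ _ _).trans <|
    (Set.finsetSum_subset_finsetSum _ _ _ fun i _ => hincl i).trans <|
      sum_smul_subset_convexHull_iUnion hlam hsumlam _

theorem ahpoly_in_convexhull_of_ahpolytopes
    (n nx N : ℕ) (ny : Fin N → ℕ) (qx : ℕ) (qy : Fin N → ℕ)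
    (xbar : Fin n → ℝ) (X : Matrix (Fin n) (Fin nx) ℝ)
    (Hx : Matrix (Fin qx) (Fin nx) ℝ) (hx : Fin qx → ℝ)
    (ybar : (i : Fin N) → Fin n → ℝ)
    (Y : (i : Fin N) → Matrix (Fin n) (Fin (ny i)) ℝ)
    (Hy : (i : Fin N) → Matrix (Fin (qy i)) (Fin (ny i)) ℝ)
    (hy : (i : Fin N) → Fin (qy i) → ℝ)
    (hne : {p : Fin nx → ℝ | Hx.mulVec p ≤ hx}.Nonempty)
    (lam : Fin N → ℝ)
    (xbari : Fin N → Fin n → ℝ)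
    (Xi : Fin N → Matrix (Fin n) (Fin nx) ℝ)
    (hlam : ∀ i, 0 ≤ lam i)
    (hsumlam : ∑ i, lam i = 1)
    (hincl : ∀ i,
      (fun p => xbari i + (Xi i).mulVec p) '' {p : Fin nx → ℝ | Hx.mulVec p ≤ hx}
        ⊆ lam i • ((fun q => ybar i + (Y i).mulVec q) ''
            {q : Fin (ny i) → ℝ | (Hy i).mulVec q ≤ hy i}))
    (hsumx : ∑ i, xbari i = xbar)
    (hsumX : ∑ i, Xi i = X) :
    (fun p => xbar + X.mulVec p) '' {p : Fin nx → ℝ | Hx.mulVec p ≤ hx}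
      ⊆ convexHull ℝ (⋃ i, (fun q => ybar i + (Y i).mulVec q) ''
          {q : Fin (ny i) → ℝ | (Hy i).mulVec q ≤ hy i}) :=
  ahpoly_in_convexhull_of_ahpolytopes_general n nx N ny qx qy xbar X Hx hx ybar Y Hy hy lam xbari Xi
    hlam hsumlam hincl hsumx hsumX
end
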